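/- Let ψ: Σ → S² be a harmonic map from a torus Σ and L_ψ = J_ψ + A_ψ† its improved Jacobi operator, acting on maps Σ → ℝ³. For any smooth function α: Σ → ℝ, one has L_ψ(αψ) = −(Δα)ψ − 4(α_x ψ_x + α_y ψ_y); in particular L_ψ(αψ) = 0 forces Δα = 0, hence α is constant. Consequently ker L_ψ = ker J_ψ ⊕ span{ψ}, where span{ψ} consists of multiples of ψ by constant functions. -/

import Mathlib

/- Common setup: a flat two-torus is modelled as ℝ² modulo the lattice generated by two
linearly independent vectors `ω₁, ω₂`; fields on the torus are doubly periodic maps on ℝ². -/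

noncomputable section

open MeasureTheory Real RealInnerProductSpace Filter

abbrev E3 := EuclideanSpace ℝ (Fin 3)

section Defs

variable {F : Type*} [NormedAddCommGroup F] [NormedSpace ℝ F]

/-- Doubly periodic with respect to the lattice generated by `ω₁, ω₂`. -/
def Per (ω₁ ω₂ : ℝ × ℝ) (f : ℝ × ℝ → F) : Prop :=
  ∀ p : ℝ × ℝ, f (p + ω₁) = f p ∧ f (p + ω₂) = f p

def Sm3 (f : ℝ × ℝ → F) : Prop := ContDiff ℝ (⊤ : ℕ∞) f

def pdx (f : ℝ × ℝ → F) : ℝ × ℝ → F := fun p => fderiv ℝ f p (1, 0)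
def pdy (f : ℝ × ℝ → F) : ℝ × ℝ → F := fun p => fderiv ℝ f p (0, 1)
def lap (f : ℝ × ℝ → F) : ℝ × ℝ → F := fun p => pdx (pdx f) p + pdy (pdy f) p

/-- Time derivative of a time-dependent field. -/
def tderiv (Y : ℝ → ℝ × ℝ → F) : ℝ → ℝ × ℝ → F := fun t p => deriv (fun s => Y s p) t

/-- Integral over a fundamental cell of the lattice, w.r.t. the flat area element. -/
def cellInt (ω₁ ω₂ : ℝ × ℝ) (f : ℝ × ℝ → ℝ) : ℝ :=
  |ω₁.1 * ω₂.2 - ω₁.2 * ω₂.1| *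
    ∫ s in Set.Icc (0 : ℝ) 1, ∫ t in Set.Icc (0 : ℝ) 1, f (s • ω₁ + t • ω₂)

/-- Square of the Sobolev `H^k` norm. -/
def sobNormSq (ω₁ ω₂ : ℝ × ℝ) (k : ℕ) (f : ℝ × ℝ → F) : ℝ :=
  ∑ j ∈ Finset.range (k + 1), cellInt ω₁ ω₂ (fun p => ‖iteratedFDeriv ℝ j f p‖ ^ 2)

/-- Sobolev `H^k` norm. -/
def sobNorm (ω₁ ω₂ : ℝ × ℝ) (k : ℕ) (f : ℝ × ℝ → F) : ℝ :=
  Real.sqrt (sobNormSq ω₁ ω₂ k f)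

end Defs

def dot3 (u v : E3) : ℝ := inner ℝ u v

def cross3 (u v : E3) : E3 :=
  (WithLp.equiv 2 (Fin 3 → ℝ)).symm
    ![u 1 * v 2 - u 2 * v 1, u 2 * v 0 - u 0 * v 2, u 0 * v 1 - u 1 * v 0]

def l2inner (ω₁ ω₂ : ℝ × ℝ) (f g : ℝ × ℝ → E3) : ℝ :=
  cellInt ω₁ ω₂ fun p => dot3 (f p) (g p)

/-- Dirichlet energy. -/
def dirichlet (ω₁ ω₂ : ℝ × ℝ) (φ : ℝ × ℝ → E3) : ℝ :=
  (1 / 2) * cellInt ω₁ ω₂ fun p => ‖pdx φ p‖ ^ 2 + ‖pdy φ p‖ ^ 2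

/-- The topological degree of `φ : Σ → S²`, via the integral of the pulled back area form. -/
def degreeIs (ω₁ ω₂ : ℝ × ℝ) (φ : ℝ × ℝ → E3) (n : ℤ) : Prop :=
  (n : ℝ) = (1 / (4 * Real.pi)) * cellInt ω₁ ω₂ fun p => dot3 (φ p) (cross3 (pdx φ p) (pdy φ p))

/-- Holomorphicity = the Cauchy-Riemann equation for maps to S² (complex structure u × ·). -/
def Holo (φ : ℝ × ℝ → E3) : Prop := ∀ p, pdy φ p = cross3 (φ p) (pdx φ p)

def AntiHolo (φ : ℝ × ℝ → E3) : Prop := ∀ p, pdy φ p = -cross3 (φ p) (pdx φ p)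

/-- The harmonic map equation for maps to the unit sphere. -/
def Harmonic (ψ : ℝ × ℝ → E3) : Prop :=
  ∀ p, lap ψ p + (‖pdx ψ p‖ ^ 2 + ‖pdy ψ p‖ ^ 2) • ψ p = 0

/-- The Jacobi operator of a harmonic map `ψ`, extended to all ℝ³-valued maps. -/
def Jop (ψ V : ℝ × ℝ → E3) : ℝ × ℝ → E3 := fun p =>
  -lap V p - (‖pdx ψ p‖ ^ 2 + ‖pdy ψ p‖ ^ 2) • V p
    - (2 * (dot3 (pdx ψ p) (pdx V p) + dot3 (pdy ψ p) (pdy V p))) • ψ p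

/-- The non-self-adjoint piece `A_ψ`. -/
def Aop (ψ Z : ℝ × ℝ → E3) : ℝ × ℝ → E3 := fun p =>
  (-(2 * (dot3 (pdx ψ p) (pdx Z p) + dot3 (pdy ψ p) (pdy Z p)))) • ψ p

/-- Its formal L² adjoint `A_ψ†`. -/
def Adag (ψ Z : ℝ × ℝ → E3) : ℝ × ℝ → E3 := fun p =>
  -((2 * dot3 (ψ p) (Z p)) • lap ψ p
    + (2 * pdx (fun q => dot3 (ψ q) (Z q)) p) • pdx ψ p
    + (2 * pdy (fun q => dot3 (ψ q) (Z q)) p) • pdy ψ p)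

/-- The improved Jacobi operator `L_ψ = J_ψ + A_ψ†`. -/
def Lop (ψ Z : ℝ × ℝ → E3) : ℝ × ℝ → E3 := fun p => Jop ψ Z p + Adag ψ Z p

/-- Membership in the kernel of the Jacobi operator, as a (tangent) section. -/
def InKerJ (ω₁ ω₂ : ℝ × ℝ) (ψ V : ℝ × ℝ → E3) : Prop :=
  Sm3 V ∧ Per ω₁ ω₂ V ∧ (∀ p, dot3 (ψ p) (V p) = 0) ∧ ∀ p, Jop ψ V p = 0

/-- The quadratic form `Q₁(Y) = ⟨Y, L_ψ Y⟩_{L²}`. -/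
def Q1form (ω₁ ω₂ : ℝ × ℝ) (ψ Y : ℝ × ℝ → E3) : ℝ :=
  cellInt ω₁ ω₂ fun p => dot3 (Y p) (Lop ψ Y p)

section Helpers

variable {F : Type*} [NormedAddCommGroup F] [NormedSpace ℝ F]

lemma Sm3.diffAt {f : ℝ × ℝ → F} (hf : Sm3 f) (p : ℝ × ℝ) : DifferentiableAt ℝ f p :=
  (hf.differentiable (by simp)).differentiableAt

lemma Sm3.pdx' {f : ℝ × ℝ → F} (hf : Sm3 f) : Sm3 (pdx f) :=
  (hf.fderiv_right (m := (⊤ : ℕ∞)) (by exact_mod_cast le_top)).clm_apply contDiff_const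

lemma Sm3.pdy' {f : ℝ × ℝ → F} (hf : Sm3 f) : Sm3 (pdy f) :=
  (hf.fderiv_right (m := (⊤ : ℕ∞)) (by exact_mod_cast le_top)).clm_apply contDiff_const

lemma pdx_add {f g : ℝ × ℝ → F} (hf : Sm3 f) (hg : Sm3 g) (p : ℝ × ℝ) :
    pdx (fun q => f q + g q) p = pdx f p + pdx g p := by
  simp [pdx, fderiv_fun_add (hf.diffAt p) (hg.diffAt p)]

lemma pdy_add {f g : ℝ × ℝ → F} (hf : Sm3 f) (hg : Sm3 g) (p : ℝ × ℝ) :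
    pdy (fun q => f q + g q) p = pdy f p + pdy g p := by
  simp [pdy, fderiv_fun_add (hf.diffAt p) (hg.diffAt p)]

lemma pdx_smul {α : ℝ × ℝ → ℝ} {f : ℝ × ℝ → F} (hα : Sm3 α) (hf : Sm3 f) (p : ℝ × ℝ) :
    pdx (fun q => α q • f q) p = pdx α p • f p + α p • pdx f p := by
  simp only [pdx, fderiv_fun_smul (hα.diffAt p) (hf.diffAt p)]
  simp [ContinuousLinearMap.smulRight_apply, add_comm]

lemma pdy_smul {α : ℝ × ℝ → ℝ} {f : ℝ × ℝ → F} (hα : Sm3 α) (hf : Sm3 f) (p : ℝ × ℝ) :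
    pdy (fun q => α q • f q) p = pdy α p • f p + α p • pdy f p := by
  simp only [pdy, fderiv_fun_smul (hα.diffAt p) (hf.diffAt p)]
  simp [ContinuousLinearMap.smulRight_apply, add_comm]

lemma pdx_dot {f g : ℝ × ℝ → E3} (hf : Sm3 f) (hg : Sm3 g) (p : ℝ × ℝ) :
    pdx (fun q => dot3 (f q) (g q)) p = dot3 (pdx f p) (g p) + dot3 (f p) (pdx g p) := by
  simp only [pdx, dot3]
  rw [fderiv_inner_apply (𝕜 := ℝ) (hf.diffAt p) (hg.diffAt p)]
  exact add_comm _ _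

lemma pdy_dot {f g : ℝ × ℝ → E3} (hf : Sm3 f) (hg : Sm3 g) (p : ℝ × ℝ) :
    pdy (fun q => dot3 (f q) (g q)) p = dot3 (pdy f p) (g p) + dot3 (f p) (pdy g p) := by
  simp only [pdy, dot3]
  rw [fderiv_inner_apply (𝕜 := ℝ) (hf.diffAt p) (hg.diffAt p)]
  exact add_comm _ _

lemma Sm3.dot {f g : ℝ × ℝ → E3} (hf : Sm3 f) (hg : Sm3 g) :
    Sm3 (fun q => dot3 (f q) (g q)) := hf.inner ℝ hg

lemma pdx_const (c : F) (p : ℝ × ℝ) : pdx (fun _ => c) p = 0 := by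
  simp [pdx]

lemma pdy_const (c : F) (p : ℝ × ℝ) : pdy (fun _ => c) p = 0 := by
  simp [pdy]

lemma fderiv_shift {f : ℝ × ℝ → F} (hf : Sm3 f) (ω p v : ℝ × ℝ) :
    fderiv ℝ (fun q => f (q + ω)) p v = fderiv ℝ f (p + ω) v := by
  have h : HasFDerivAt (fun q : ℝ × ℝ => q + ω) (ContinuousLinearMap.id ℝ (ℝ × ℝ)) p :=
    (hasFDerivAt_id p).add_const ω
  have h2 := ((hf.diffAt (p + ω)).hasFDerivAt.comp p h)
  have h3 : fderiv ℝ (fun q => f (q + ω)) p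
      = (fderiv ℝ f (p + ω)).comp (ContinuousLinearMap.id ℝ (ℝ × ℝ)) := h2.fderiv
  rw [h3]; rfl

lemma Per.pdx' {ω₁ ω₂ : ℝ × ℝ} {f : ℝ × ℝ → F} (hf : Sm3 f) (h : Per ω₁ ω₂ f) :
    Per ω₁ ω₂ (pdx f) := by
  intro p
  have e1 : (fun q => f (q + ω₁)) = f := funext fun q => (h q).1
  have e2 : (fun q => f (q + ω₂)) = f := funext fun q => (h q).2
  constructor
  · show fderiv ℝ f _ _ = fderiv ℝ f _ _
    rw [← fderiv_shift hf ω₁ p (1, 0), e1]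
  · show fderiv ℝ f _ _ = fderiv ℝ f _ _
    rw [← fderiv_shift hf ω₂ p (1, 0), e2]

lemma Per.pdy' {ω₁ ω₂ : ℝ × ℝ} {f : ℝ × ℝ → F} (hf : Sm3 f) (h : Per ω₁ ω₂ f) :
    Per ω₁ ω₂ (pdy f) := by
  intro p
  have e1 : (fun q => f (q + ω₁)) = f := funext fun q => (h q).1
  have e2 : (fun q => f (q + ω₂)) = f := funext fun q => (h q).2
  constructor
  · show fderiv ℝ f _ _ = fderiv ℝ f _ _
    rw [← fderiv_shift hf ω₁ p (0, 1), e1]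
  · show fderiv ℝ f _ _ = fderiv ℝ f _ _
    rw [← fderiv_shift hf ω₂ p (0, 1), e2]

end Helpers
section Helpers2

variable {F : Type*} [NormedAddCommGroup F] [NormedSpace ℝ F]

lemma Sm3.fderiv' {f : ℝ × ℝ → F} (hf : Sm3 f) :
    Differentiable ℝ (fderiv ℝ f) :=
  ((hf.fderiv_right (m := (⊤ : ℕ∞)) (by exact_mod_cast le_top)).differentiable
    (by simp))

lemma pdx_pdy_comm {f : ℝ × ℝ → F} (hf : Sm3 f) (p : ℝ × ℝ) :
    pdx (pdy f) p = pdy (pdx f) p := by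
  have hdiff : ∀ q, HasFDerivAt f (fderiv ℝ f q) q := fun q => (hf.diffAt q).hasFDerivAt
  have hd2 : HasFDerivAt (fderiv ℝ f) (fderiv ℝ (fderiv ℝ f) p) p :=
    (hf.fderiv' p).hasFDerivAt
  have hsymm := second_derivative_symmetric hdiff hd2 ((0 : ℝ), (1 : ℝ)) (1, 0)
  have e1 : ∀ v w : ℝ × ℝ, fderiv ℝ (fun q => fderiv ℝ f q v) p w
      = (fderiv ℝ (fderiv ℝ f) p w) v := by
    intro v w
    rw [fderiv_clm_apply (hf.fderiv' p) (differentiableAt_const v)]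
    simp
  show fderiv ℝ (fun q => fderiv ℝ f q (0, 1)) p (1, 0)
      = fderiv ℝ (fun q => fderiv ℝ f q (1, 0)) p (0, 1)
  rw [e1, e1]
  exact hsymm.symm

lemma lap_add {f g : ℝ × ℝ → F} (hf : Sm3 f) (hg : Sm3 g) (p : ℝ × ℝ) :
    lap (fun q => f q + g q) p = lap f p + lap g p := by
  have ex : pdx (fun q => f q + g q) = fun q => pdx f q + pdx g q :=
    funext (pdx_add hf hg)
  have ey : pdy (fun q => f q + g q) = fun q => pdy f q + pdy g q :=
    funext (pdy_add hf hg)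
  simp only [lap, ex, ey, pdx_add hf.pdx' hg.pdx', pdy_add hf.pdy' hg.pdy']
  abel

lemma lap_smul {α : ℝ × ℝ → ℝ} {f : ℝ × ℝ → F} (hα : Sm3 α) (hf : Sm3 f) (p : ℝ × ℝ) :
    lap (fun q => α q • f q) p
      = lap α p • f p + (2 * pdx α p) • pdx f p + (2 * pdy α p) • pdy f p
        + α p • lap f p := by
  have ex : pdx (fun q => α q • f q) = fun q => pdx α q • f q + α q • pdx f q :=
    funext (pdx_smul hα hf)
  have ey : pdy (fun q => α q • f q) = fun q => pdy α q • f q + α q • pdy f q :=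
    funext (pdy_smul hα hf)
  have h1 : Sm3 (fun q => pdx α q • f q) := (hα.pdx').smul hf
  have h2 : Sm3 (fun q => α q • pdx f q) := hα.smul hf.pdx'
  have h3 : Sm3 (fun q => pdy α q • f q) := (hα.pdy').smul hf
  have h4 : Sm3 (fun q => α q • pdy f q) := hα.smul hf.pdy'
  simp only [lap, ex, ey, pdx_add h1 h2, pdy_add h3 h4,
    pdx_smul hα.pdx' hf, pdx_smul hα hf.pdx', pdy_smul hα.pdy' hf, pdy_smul hα hf.pdy']
  module

lemma lap_const (c : F) (p : ℝ × ℝ) : lap (fun _ => c) p = 0 := by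
  have : pdx (fun _ : ℝ × ℝ => c) = fun _ => (0 : F) := funext (pdx_const c)
  have hy : pdy (fun _ : ℝ × ℝ => c) = fun _ => (0 : F) := funext (pdy_const c)
  simp [lap, this, hy, pdx_const, pdy_const]

end Helpers2
section Dot3API

lemma dot3_comm (u v : E3) : dot3 u v = dot3 v u := real_inner_comm v u

lemma dot3_self (u : E3) : dot3 u u = ‖u‖ ^ 2 := real_inner_self_eq_norm_sq u

lemma dot3_add_right (u v w : E3) : dot3 u (v + w) = dot3 u v + dot3 u w :=
  inner_add_right u v w

lemma dot3_add_left (u v w : E3) : dot3 (u + v) w = dot3 u w + dot3 v w :=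
  inner_add_left u v w

lemma dot3_smul_right (c : ℝ) (u v : E3) : dot3 u (c • v) = c * dot3 u v :=
  real_inner_smul_right u v c

lemma dot3_smul_left (c : ℝ) (u v : E3) : dot3 (c • u) v = c * dot3 u v :=
  real_inner_smul_left u v c

lemma dot3_neg_right (u v : E3) : dot3 u (-v) = -dot3 u v := inner_neg_right u v

lemma dot3_neg_left (u v : E3) : dot3 (-u) v = -dot3 u v := inner_neg_left u v

lemma dot3_sub_right (u v w : E3) : dot3 u (v - w) = dot3 u v - dot3 u w :=
  inner_sub_right u v w

lemma dot3_zero_right (u : E3) : dot3 u 0 = 0 := inner_zero_right u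

lemma dot3_zero_left (u : E3) : dot3 0 u = 0 := inner_zero_left u

end Dot3API

section Sphere

variable {ψ : ℝ × ℝ → E3}

lemma dot_psi_self (hsph : ∀ p, ‖ψ p‖ = 1) (p : ℝ × ℝ) :
    dot3 (ψ p) (ψ p) = 1 := by rw [dot3_self, hsph p]; norm_num

lemma dot_psi_self_fun (hsph : ∀ p, ‖ψ p‖ = 1) :
    (fun q => dot3 (ψ q) (ψ q)) = fun _ => (1 : ℝ) :=
  funext fun q => dot_psi_self hsph q

lemma dot_psi_pdx (hψ : Sm3 ψ) (hsph : ∀ p, ‖ψ p‖ = 1) (p : ℝ × ℝ) :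
    dot3 (ψ p) (pdx ψ p) = 0 := by
  have h := pdx_dot hψ hψ p
  rw [dot_psi_self_fun hsph, pdx_const] at h
  rw [dot3_comm (pdx ψ p) (ψ p)] at h
  linarith

lemma dot_psi_pdy (hψ : Sm3 ψ) (hsph : ∀ p, ‖ψ p‖ = 1) (p : ℝ × ℝ) :
    dot3 (ψ p) (pdy ψ p) = 0 := by
  have h := pdy_dot hψ hψ p
  rw [dot_psi_self_fun hsph, pdy_const] at h
  rw [dot3_comm (pdy ψ p) (ψ p)] at h
  linarith

lemma lap_psi_eq (hharm : Harmonic ψ) (p : ℝ × ℝ) :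
    lap ψ p = (-(‖pdx ψ p‖ ^ 2 + ‖pdy ψ p‖ ^ 2)) • ψ p := by
  have h2 : lap ψ p = -((‖pdx ψ p‖ ^ 2 + ‖pdy ψ p‖ ^ 2) • ψ p) :=
    eq_neg_of_add_eq_zero_left (hharm p)
  rw [h2, neg_smul]

end Sphere

section Part1

variable {ψ : ℝ × ℝ → E3}

/-- Statement 4, first part (pointwise identity); periodicity not needed. -/
lemma part1_formula (hψ : Sm3 ψ) (hsph : ∀ p, ‖ψ p‖ = 1) (hharm : Harmonic ψ)
    (α : ℝ × ℝ → ℝ) (hα : Sm3 α) (p : ℝ × ℝ) :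
    Lop ψ (fun q => α q • ψ q) p
      = (-(lap α p)) • ψ p + (-(4 * pdx α p)) • pdx ψ p + (-(4 * pdy α p)) • pdy ψ p := by
  have hZx : pdx (fun q => α q • ψ q) p = pdx α p • ψ p + α p • pdx ψ p := pdx_smul hα hψ p
  have hZy : pdy (fun q => α q • ψ q) p = pdy α p • ψ p + α p • pdy ψ p := pdy_smul hα hψ p
  have hlapZ := lap_smul hα hψ p
  have hdotα : (fun q => dot3 (ψ q) (α q • ψ q)) = α := by
    funext q
    rw [dot3_smul_right, dot_psi_self hsph q, mul_one]
  have hd1 : dot3 (pdx ψ p) (pdx (fun q => α q • ψ q) p) = α p * ‖pdx ψ p‖ ^ 2 := by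
    rw [hZx, dot3_add_right, dot3_smul_right, dot3_smul_right, dot3_self,
      dot3_comm (pdx ψ p) (ψ p), dot_psi_pdx hψ hsph p]
    ring
  have hd2 : dot3 (pdy ψ p) (pdy (fun q => α q • ψ q) p) = α p * ‖pdy ψ p‖ ^ 2 := by
    rw [hZy, dot3_add_right, dot3_smul_right, dot3_smul_right, dot3_self,
      dot3_comm (pdy ψ p) (ψ p), dot_psi_pdy hψ hsph p]
    ring
  have hdotα2 : (fun q => α q * dot3 (ψ q) (ψ q)) = α :=
    funext fun q => by rw [dot_psi_self hsph q, mul_one]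
  show Jop ψ (fun q => α q • ψ q) p + Adag ψ (fun q => α q • ψ q) p = _
  rw [Jop, Adag]
  simp only [hdotα, hd1, hd2, hlapZ, lap_psi_eq hharm p,
    dot3_smul_right, dot_psi_self hsph p, hdotα2]
  module

end Part1
section Tangent

variable {ψ V Y W : ℝ × ℝ → E3}

lemma Adag_tangent (hψ : Sm3 ψ) (htan : ∀ p, dot3 (ψ p) (V p) = 0) (p : ℝ × ℝ) :
    Adag ψ V p = 0 := by
  have h0 : (fun q => dot3 (ψ q) (V q)) = fun _ => (0 : ℝ) := funext htan
  rw [Adag, h0]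
  simp [pdx_const, pdy_const, htan p]

lemma dot_psi_lap_tangent (hψ : Sm3 ψ) (hV : Sm3 V) (hsph : ∀ p, ‖ψ p‖ = 1)
    (hharm : Harmonic ψ) (htan : ∀ p, dot3 (ψ p) (V p) = 0) (p : ℝ × ℝ) :
    dot3 (ψ p) (lap V p)
      = -(2 * (dot3 (pdx ψ p) (pdx V p) + dot3 (pdy ψ p) (pdy V p))) := by
  have h0 : (fun q => dot3 (ψ q) (V q)) = fun _ => (0 : ℝ) := funext htan
  have gx : (fun q => dot3 (pdx ψ q) (V q) + dot3 (ψ q) (pdx V q)) = fun _ => (0 : ℝ) := by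
    funext q
    rw [← pdx_dot hψ hV q, h0, pdx_const]
  have gy : (fun q => dot3 (pdy ψ q) (V q) + dot3 (ψ q) (pdy V q)) = fun _ => (0 : ℝ) := by
    funext q
    rw [← pdy_dot hψ hV q, h0, pdy_const]
  have hgx : pdx (fun q => dot3 (pdx ψ q) (V q) + dot3 (ψ q) (pdx V q)) p = 0 := by
    rw [gx, pdx_const]
  have hgy : pdy (fun q => dot3 (pdy ψ q) (V q) + dot3 (ψ q) (pdy V q)) p = 0 := by
    rw [gy, pdy_const]
  rw [pdx_add (hψ.pdx'.dot hV) (hψ.dot hV.pdx'),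
    pdx_dot hψ.pdx' hV, pdx_dot hψ hV.pdx'] at hgx
  rw [pdy_add (hψ.pdy'.dot hV) (hψ.dot hV.pdy'),
    pdy_dot hψ.pdy' hV, pdy_dot hψ hV.pdy'] at hgy
  have hlψ : dot3 (pdx (pdx ψ) p) (V p) + dot3 (pdy (pdy ψ) p) (V p) = 0 := by
    rw [← dot3_add_left]
    show dot3 (lap ψ p) (V p) = 0
    rw [lap_psi_eq hharm p, dot3_smul_left, htan p, mul_zero]
  have : dot3 (ψ p) (lap V p)
      = dot3 (ψ p) (pdx (pdx V) p) + dot3 (ψ p) (pdy (pdy V) p) := dot3_add_right _ _ _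
  rw [this]
  linarith

lemma dot_psi_Jop_tangent (hψ : Sm3 ψ) (hV : Sm3 V) (hsph : ∀ p, ‖ψ p‖ = 1)
    (hharm : Harmonic ψ) (htan : ∀ p, dot3 (ψ p) (V p) = 0) (p : ℝ × ℝ) :
    dot3 (ψ p) (Jop ψ V p) = 0 := by
  rw [Jop]
  rw [dot3_sub_right, dot3_sub_right, dot3_neg_right, dot3_smul_right, dot3_smul_right,
    dot_psi_lap_tangent hψ hV hsph hharm htan p, htan p, dot_psi_self hsph p]
  ring

lemma Lop_add (hψ : Sm3 ψ) (hY : Sm3 Y) (hW : Sm3 W) (p : ℝ × ℝ) :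
    Lop ψ (fun q => Y q + W q) p = Lop ψ Y p + Lop ψ W p := by
  have hdot : (fun q => dot3 (ψ q) (Y q + W q))
      = fun q => dot3 (ψ q) (Y q) + dot3 (ψ q) (W q) :=
    funext fun q => dot3_add_right _ _ _
  rw [Lop, Lop, Lop, Jop, Jop, Jop, Adag, Adag, Adag]
  rw [lap_add hY hW p, pdx_add hY hW p, pdy_add hY hW p, hdot,
    pdx_add (hψ.dot hY) (hψ.dot hW), pdy_add (hψ.dot hY) (hψ.dot hW),
    dot3_add_right, dot3_add_right, dot3_add_right]
  module

end Tangent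
section Liouville

variable {F : Type*} [NormedAddCommGroup F] [NormedSpace ℝ F]

lemma Per.shift1 {ω₁ ω₂ : ℝ × ℝ} {f : ℝ × ℝ → F} (h : Per ω₁ ω₂ f) (m : ℤ) (p : ℝ × ℝ) :
    f (p + (m : ℝ) • ω₁) = f p := by
  induction m using Int.induction_on with
  | zero => simp
  | succ n ih =>
    have : p + ((n : ℝ) + 1) • ω₁ = (p + (n : ℝ) • ω₁) + ω₁ := by
      rw [add_smul, one_smul]; abel
    push_cast
    rw [this, (h _).1]
    exact_mod_cast ih
  | pred n ih =>
    have key : f (p + (-(n : ℝ) - 1) • ω₁ + ω₁) = f (p + (-(n : ℝ) - 1) • ω₁) :=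
      (h _).1
    have e : p + (-(n : ℝ) - 1) • ω₁ + ω₁ = p + (-(n : ℝ)) • ω₁ := by
      rw [sub_smul, one_smul]; abel
    rw [e] at key
    push_cast
    push_cast at ih
    rw [← key]
    exact ih

lemma Per.shift2 {ω₁ ω₂ : ℝ × ℝ} {f : ℝ × ℝ → F} (h : Per ω₁ ω₂ f) (n : ℤ) (p : ℝ × ℝ) :
    f (p + (n : ℝ) • ω₂) = f p := by
  have h' : Per ω₂ ω₁ f := fun p => ⟨(h p).2, (h p).1⟩
  exact h'.shift1 n p

/-- Any point differs from a point of the fundamental cell by a lattice vector. -/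
lemma cell_reduce {ω₁ ω₂ : ℝ × ℝ} (hindep : ω₁.1 * ω₂.2 - ω₁.2 * ω₂.1 ≠ 0)
    {f : ℝ × ℝ → F} (hper : Per ω₁ ω₂ f) (p : ℝ × ℝ) :
    ∃ s t : ℝ, s ∈ Set.Icc (0:ℝ) 1 ∧ t ∈ Set.Icc (0:ℝ) 1 ∧ f p = f (s • ω₁ + t • ω₂) := by
  set d := ω₁.1 * ω₂.2 - ω₁.2 * ω₂.1 with hd
  set a := (p.1 * ω₂.2 - p.2 * ω₂.1) / d with ha
  set b := (ω₁.1 * p.2 - ω₁.2 * p.1) / d with hb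
  have hab : a • ω₁ + b • ω₂ = p := by
    have h1 : a * ω₁.1 + b * ω₂.1 = p.1 := by
      rw [ha, hb]; field_simp; ring
    have h2 : a * ω₁.2 + b * ω₂.2 = p.2 := by
      rw [ha, hb]; field_simp; ring
    exact Prod.ext h1 h2
  refine ⟨Int.fract a, Int.fract b, ⟨(Int.fract_nonneg a), (Int.fract_lt_one a).le⟩,
    ⟨(Int.fract_nonneg b), (Int.fract_lt_one b).le⟩, ?_⟩
  have e : p = (Int.fract a • ω₁ + Int.fract b • ω₂) + ((⌊a⌋ : ℝ) • ω₁) + ((⌊b⌋ : ℝ) • ω₂) := by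
    rw [← hab]
    rw [Int.fract, Int.fract, sub_smul, sub_smul]
    abel
  rw [e, hper.shift2, hper.shift1]

lemma per_bounded {f : ℝ × ℝ → F} {ω₁ ω₂ : ℝ × ℝ}
    (hindep : ω₁.1 * ω₂.2 - ω₁.2 * ω₂.1 ≠ 0)
    (hc : Continuous f) (hper : Per ω₁ ω₂ f) :
    Bornology.IsBounded (Set.range f) := by
  set K : Set (ℝ × ℝ) :=
    (fun st : ℝ × ℝ => st.1 • ω₁ + st.2 • ω₂) '' (Set.Icc 0 1 ×ˢ Set.Icc 0 1) with hK
  have hKc : IsCompact K := by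
    apply (isCompact_Icc.prod isCompact_Icc).image
    exact ((continuous_fst.smul continuous_const).add (continuous_snd.smul continuous_const))
  have hsub : Set.range f ⊆ f '' K := by
    rintro _ ⟨p, rfl⟩
    obtain ⟨s, t, hs, ht, hst⟩ := cell_reduce hindep hper p
    exact ⟨s • ω₁ + t • ω₂, ⟨(s, t), Set.mk_mem_prod hs ht, rfl⟩, hst.symm⟩
  exact ((hKc.image hc).isBounded).subset hsub

end Liouville
section HarmConst

/-- Evaluation of a CLM on `ℝ × ℝ` via the standard basis. -/
lemma clm_eval (L : ℝ × ℝ →L[ℝ] ℝ) (w : ℝ × ℝ) :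
    L w = w.1 * L (1, 0) + w.2 * L (0, 1) := by
  have hw : w = w.1 • ((1:ℝ), (0:ℝ)) + w.2 • ((0:ℝ), (1:ℝ)) := by
    apply Prod.ext <;> simp
  conv_lhs => rw [hw]
  rw [L.map_add, L.map_smul, L.map_smul]
  simp [smul_eq_mul]

/-- A smooth doubly periodic harmonic function on the plane is constant. -/
lemma harmonic_periodic_const {ω₁ ω₂ : ℝ × ℝ} (hindep : ω₁.1 * ω₂.2 - ω₁.2 * ω₂.1 ≠ 0)
    {α : ℝ × ℝ → ℝ} (hα : Sm3 α) (hper : Per ω₁ ω₂ α) (hlap : ∀ p, lap α p = 0) :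
    ∀ p, α p = α 0 := by
  set u := pdx α with hu
  set v := pdy α with hv
  have hus : Sm3 u := hα.pdx'
  have hvs : Sm3 v := hα.pdy'
  set g : ℝ × ℝ → ℝ × ℝ := fun p => (u p, -v p) with hg
  have hgper : Per ω₁ ω₂ g := by
    intro p
    refine ⟨?_, ?_⟩ <;> rw [hg] <;> simp only [Prod.mk.injEq]
    · exact ⟨((hper.pdx' hα) p).1, by rw [show v (p + ω₁) = v p from ((hper.pdy' hα) p).1]⟩
    · exact ⟨((hper.pdx' hα) p).2, by rw [show v (p + ω₂) = v p from ((hper.pdy' hα) p).2]⟩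
  have hgcont : Continuous g :=
    ((hus.continuous).prodMk (hvs.continuous.neg))
  set f : ℂ → ℂ := fun z => Complex.equivRealProdCLM.symm (g (z.re, z.im)) with hf
  -- f is entire
  have hfdiff : Differentiable ℂ f := by
    intro z
    set p : ℝ × ℝ := (z.re, z.im) with hp
    set a : ℝ := pdx u p with hA
    set b : ℝ := pdx v p with hB
    have hyu : pdy u p = b := by
      rw [hu, hB, hv, pdx_pdy_comm hα p]
    have hyv : pdy v p = -a := by
      have := hlap p
      rw [lap] at this
      rw [hA, hu, hv]
      linarith
    -- the real derivative of g at p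
    have hDg : HasFDerivAt g ((fderiv ℝ u p).prod (-(fderiv ℝ v p))) p :=
      HasFDerivAt.prodMk (hus.diffAt p).hasFDerivAt ((hvs.diffAt p).hasFDerivAt.neg)
    have hri : HasFDerivAt (fun z : ℂ => ((z.re, z.im) : ℝ × ℝ))
        (Complex.equivRealProdCLM : ℂ →L[ℝ] ℝ × ℝ) z :=
      Complex.equivRealProdCLM.hasFDerivAt
    have hF : HasFDerivAt f
        (((Complex.equivRealProdCLM.symm : ℝ × ℝ →L[ℝ] ℂ).comp
          ((fderiv ℝ u p).prod (-(fderiv ℝ v p)))).comp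
            (Complex.equivRealProdCLM : ℂ →L[ℝ] ℝ × ℝ)) z := by
      exact ((Complex.equivRealProdCLM.symm.hasFDerivAt.comp _ (hDg.comp z hri)))
    set c : ℂ := Complex.mk a (-b) with hc
    have hH : (ContinuousLinearMap.mul ℂ ℂ c).restrictScalars ℝ
        = ((Complex.equivRealProdCLM.symm : ℝ × ℝ →L[ℝ] ℂ).comp
          ((fderiv ℝ u p).prod (-(fderiv ℝ v p)))).comp
            (Complex.equivRealProdCLM : ℂ →L[ℝ] ℝ × ℝ) := by
      apply ContinuousLinearMap.ext
      intro w
      have e1 : fderiv ℝ u p (w.re, w.im) = w.re * a + w.im * b := by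
        rw [clm_eval]
        show w.re * pdx u p + w.im * pdy u p = _
        rw [hyu, hA]
      have e2 : fderiv ℝ v p (w.re, w.im) = w.re * b - w.im * a := by
        rw [clm_eval]
        show w.re * pdx v p + w.im * pdy v p = _
        rw [hyv, hB]; ring
      show c * w = Complex.equivRealProdCLM.symm
        ((fderiv ℝ u p) ((Complex.equivRealProdCLM : ℂ →L[ℝ] ℝ × ℝ) w),
          -((fderiv ℝ v p) ((Complex.equivRealProdCLM : ℂ →L[ℝ] ℝ × ℝ) w)))
      have hw : ((Complex.equivRealProdCLM : ℂ →L[ℝ] ℝ × ℝ) w) = (w.re, w.im) := rfl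
      rw [hw, e1, e2, Complex.equivRealProdCLM_symm_apply]
      apply Complex.ext
      · simp [hc, Complex.mul_re]; ring
      · simp [hc, Complex.mul_im]; ring
    exact ⟨_, hasFDerivAt_of_restrictScalars ℝ hF hH⟩
  -- f is bounded
  have hbdd : Bornology.IsBounded (Set.range f) := by
    have hmain : Bornology.IsBounded (Set.range fun p : ℝ × ℝ =>
        (Complex.equivRealProdCLM.symm (g p) : ℂ)) := by
      apply per_bounded hindep
      · exact Complex.equivRealProdCLM.symm.continuous.comp hgcont
      · intro p
        constructor <;> simp [(hgper p).1, (hgper p).2]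
    apply hmain.subset
    rintro _ ⟨z, rfl⟩
    exact ⟨(z.re, z.im), rfl⟩
  -- Liouville
  have hconstf : ∀ z : ℂ, f z = f 0 := fun z => hfdiff.apply_eq_apply_of_bounded hbdd z 0
  -- extract constancy of u and v
  have hu_const : ∀ p : ℝ × ℝ, u p = u 0 := by
    intro p
    have h1 := hconstf (Complex.mk p.1 p.2)
    have h2 : ∀ q : ℝ × ℝ, (f (Complex.mk q.1 q.2)) = Complex.equivRealProdCLM.symm (g q) := by
      intro q; rfl
    rw [h2 p] at h1
    have h3 : f 0 = Complex.equivRealProdCLM.symm (g 0) := rfl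
    rw [h3] at h1
    have := congrArg Complex.re h1
    simpa [Complex.equivRealProdCLM_symm_apply, hg] using this
  have hv_const : ∀ p : ℝ × ℝ, v p = v 0 := by
    intro p
    have h1 := hconstf (Complex.mk p.1 p.2)
    have h2 : ∀ q : ℝ × ℝ, (f (Complex.mk q.1 q.2)) = Complex.equivRealProdCLM.symm (g q) := by
      intro q; rfl
    rw [h2 p] at h1
    have h3 : f 0 = Complex.equivRealProdCLM.symm (g 0) := rfl
    rw [h3] at h1
    have := congrArg Complex.im h1
    have h4 : -(v p) = -(v 0) := by
      simpa [Complex.equivRealProdCLM_symm_apply, hg] using this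
    linarith
  set c₁ := u 0 with hc₁
  set c₂ := v 0 with hc₂
  -- α is affine
  set L₀ : ℝ × ℝ →L[ℝ] ℝ :=
    c₁ • ContinuousLinearMap.fst ℝ ℝ ℝ + c₂ • ContinuousLinearMap.snd ℝ ℝ ℝ with hL₀
  have hL₀app : ∀ w : ℝ × ℝ, L₀ w = c₁ * w.1 + c₂ * w.2 := by
    intro w; simp [hL₀, smul_eq_mul]
  have hfd : ∀ p, fderiv ℝ α p = L₀ := by
    intro p
    apply ContinuousLinearMap.ext
    intro w
    rw [clm_eval, hL₀app]
    show w.1 * u p + w.2 * v p = _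
    rw [hu_const p, hv_const p]; ring
  set β : ℝ × ℝ → ℝ := fun p => α p - L₀ p with hβ
  have hβdiff : Differentiable ℝ β :=
    (hα.differentiable (by simp)).sub L₀.differentiable
  have hβfd : ∀ p, fderiv ℝ β p = 0 := by
    intro p
    have h1 : HasFDerivAt β (fderiv ℝ α p - L₀) p :=
      ((hα.diffAt p).hasFDerivAt.sub L₀.hasFDerivAt)
    rw [h1.fderiv, hfd p, sub_self]
  have hβconst : ∀ p, β p = β 0 := fun p =>
    is_const_of_fderiv_eq_zero hβdiff hβfd p 0
  have haff : ∀ p : ℝ × ℝ, α p = α 0 + c₁ * p.1 + c₂ * p.2 := by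
    intro p
    have h1 := hβconst p
    rw [hβ] at h1
    simp only at h1
    rw [hL₀app, hL₀app] at h1
    have h0 : ((0 : ℝ × ℝ).1 : ℝ) = 0 := rfl
    have h0' : ((0 : ℝ × ℝ).2 : ℝ) = 0 := rfl
    rw [h0, h0'] at h1
    ring_nf at h1 ⊢
    linarith
  -- periodicity kills the linear part
  have e1 : c₁ * ω₁.1 + c₂ * ω₁.2 = 0 := by
    have hp := (hper 0).1
    rw [zero_add] at hp
    have := haff ω₁
    rw [hp] at this
    linarith
  have e2 : c₁ * ω₂.1 + c₂ * ω₂.2 = 0 := by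
    have hp := (hper 0).2
    rw [zero_add] at hp
    have := haff ω₂
    rw [hp] at this
    linarith
  have hc1 : c₁ = 0 := by
    have key : c₁ * (ω₁.1 * ω₂.2 - ω₁.2 * ω₂.1) = 0 := by
      linear_combination ω₂.2 * e1 - ω₁.2 * e2
    rcases mul_eq_zero.mp key with h | h
    · exact h
    · exact absurd h hindep
  have hc2 : c₂ = 0 := by
    have key : c₂ * (ω₁.1 * ω₂.2 - ω₁.2 * ω₂.1) = 0 := by
      linear_combination ω₁.1 * e2 - ω₂.1 * e1
    rcases mul_eq_zero.mp key with h | h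
    · exact h
    · exact absurd h hindep
  intro p
  rw [haff p, hc1, hc2]
  ring

end HarmConst
section Final

variable {ψ : ℝ × ℝ → E3}

lemma tangent_part_tan (hψ : Sm3 ψ) (hsph : ∀ p, ‖ψ p‖ = 1) {Z : ℝ × ℝ → E3} (p : ℝ × ℝ) :
    dot3 (ψ p) (Z p - dot3 (ψ p) (Z p) • ψ p) = 0 := by
  rw [dot3_sub_right, dot3_smul_right, dot_psi_self hsph p, mul_one, sub_self]

lemma key_decomp (hψ : Sm3 ψ) (hsph : ∀ p, ‖ψ p‖ = 1) (hharm : Harmonic ψ)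
    (Z : ℝ × ℝ → E3) (hZ : Sm3 Z) (p : ℝ × ℝ) :
    Lop ψ Z p = Jop ψ (fun q => Z q - dot3 (ψ q) (Z q) • ψ q) p
      + ((-(lap (fun q => dot3 (ψ q) (Z q)) p)) • ψ p
        + (-(4 * pdx (fun q => dot3 (ψ q) (Z q)) p)) • pdx ψ p
        + (-(4 * pdy (fun q => dot3 (ψ q) (Z q)) p)) • pdy ψ p) := by
  have hαsm : Sm3 (fun q => dot3 (ψ q) (Z q)) := hψ.dot hZ
  have hVsm : Sm3 (fun q => Z q - dot3 (ψ q) (Z q) • ψ q) := hZ.sub (hαsm.smul hψ)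
  have hZeq : Z = fun q => (Z q - dot3 (ψ q) (Z q) • ψ q) + dot3 (ψ q) (Z q) • ψ q := by
    funext q; abel
  have htan : ∀ q, dot3 (ψ q) (Z q - dot3 (ψ q) (Z q) • ψ q) = 0 :=
    fun q => tangent_part_tan hψ hsph q
  conv_lhs => rw [hZeq]
  rw [Lop_add (W := fun q => dot3 (ψ q) (Z q) • ψ q) hψ hVsm (hαsm.smul hψ) p,
    part1_formula hψ hsph hharm _ hαsm p]
  show Jop ψ _ p + Adag ψ _ p + _ = _
  rw [Adag_tangent hψ htan p, add_zero]

theorem stmt4_improved_jacobi_normal'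
    (ω₁ ω₂ : ℝ × ℝ) (hindep : ω₁.1 * ω₂.2 - ω₁.2 * ω₂.1 ≠ 0)
    (ψ : ℝ × ℝ → E3) (hψ : Sm3 ψ) (hψper : Per ω₁ ω₂ ψ)
    (hsph : ∀ p, ‖ψ p‖ = 1) (hharm : Harmonic ψ) :
    (∀ α : ℝ × ℝ → ℝ, Sm3 α → Per ω₁ ω₂ α → ∀ p,
      Lop ψ (fun q => α q • ψ q) p
        = (-(lap α p)) • ψ p + (-(4 * pdx α p)) • pdx ψ p + (-(4 * pdy α p)) • pdy ψ p) ∧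
    (∀ Z : ℝ × ℝ → E3, Sm3 Z → Per ω₁ ω₂ Z →
      ((∀ p, Lop ψ Z p = 0) ↔
        ∃ (V : ℝ × ℝ → E3) (c : ℝ), InKerJ ω₁ ω₂ ψ V ∧ Z = fun p => V p + c • ψ p)) := by
  constructor
  · intro α hα _ p
    exact part1_formula hψ hsph hharm α hα p
  · intro Z hZ hZper
    constructor
    · -- forward direction
      intro hL0
      set α : ℝ × ℝ → ℝ := fun q => dot3 (ψ q) (Z q) with hα
      set V : ℝ × ℝ → E3 := fun q => Z q - α q • ψ q with hV
      have hαsm : Sm3 α := hψ.dot hZ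
      have hαper : Per ω₁ ω₂ α := by
        intro p
        constructor <;> simp only [hα, (hψper p).1, (hZper p).1, (hψper p).2, (hZper p).2]
      have hVsm : Sm3 V := hZ.sub (hαsm.smul hψ)
      have hVper : Per ω₁ ω₂ V := by
        intro p
        constructor <;> simp only [hV, hα, (hψper p).1, (hZper p).1, (hψper p).2, (hZper p).2]
      have htan : ∀ q, dot3 (ψ q) (V q) = 0 := fun q => tangent_part_tan hψ hsph q
      have key := key_decomp hψ hsph hharm Z hZ
      -- The Laplacian of α vanishes
      have hlapα : ∀ p, lap α p = 0 := by
        intro p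
        have h := key p
        rw [hL0 p] at h
        have h2 := congrArg (dot3 (ψ p)) h
        rw [dot3_zero_right, dot3_add_right, dot3_add_right, dot3_add_right,
          dot_psi_Jop_tangent hψ hVsm hsph hharm htan p,
          dot3_smul_right, dot3_smul_right, dot3_smul_right,
          dot_psi_self hsph p, dot_psi_pdx hψ hsph p, dot_psi_pdy hψ hsph p] at h2
        simp only [mul_zero, mul_one, add_zero, zero_add] at h2
        linarith
      have hconst := harmonic_periodic_const hindep hαsm hαper hlapα
      have hαc : α = fun _ => α 0 := funext hconst
      have hpdxα : ∀ p, pdx α p = 0 := by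
        intro p; rw [hαc]; exact pdx_const _ p
      have hpdyα : ∀ p, pdy α p = 0 := by
        intro p; rw [hαc]; exact pdy_const _ p
      refine ⟨V, α 0, ⟨hVsm, hVper, htan, ?_⟩, ?_⟩
      · intro p
        have h := key p
        rw [hL0 p, hlapα p, hpdxα p, hpdyα p] at h
        simp only [neg_zero, zero_smul, mul_zero, add_zero, zero_add] at h
        exact h.symm
      · funext p
        show Z p = V p + α 0 • ψ p
        rw [hV]
        simp only
        rw [← hconst p]
        abel
    · -- backward direction
      rintro ⟨W, c, ⟨hWsm, hWper, hWtan, hWJ⟩, hZdef⟩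
      intro p
      have hZ' : Sm3 Z := hZ
      have key := key_decomp hψ hsph hharm Z hZ p
      have hαc : (fun q => dot3 (ψ q) (Z q)) = fun _ => c := by
        funext q
        rw [hZdef]
        simp only
        rw [dot3_add_right, dot3_smul_right, hWtan q, dot_psi_self hsph q]
        ring
      have hVW : (fun q => Z q - dot3 (ψ q) (Z q) • ψ q) = W := by
        funext q
        simp only [hZdef]
        rw [dot3_add_right, dot3_smul_right, hWtan q, dot_psi_self hsph q]
        simp only [mul_one, zero_add]
        abel
      rw [hVW, hαc, hWJ p] at key
      rw [key, lap_const, pdx_const, pdy_const]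
      simp

end Final

/-- For a harmonic map `ψ : Σ → S²` and smooth `α : Σ → ℝ`,
`L_ψ(αψ) = −(Δα)ψ − 4(α_x ψ_x + α_y ψ_y)`; consequently
`ker L_ψ = ker J_ψ ⊕ span{ψ}` (constant multiples of `ψ`). -/
theorem stmt4_improved_jacobi_normal
    (ω₁ ω₂ : ℝ × ℝ) (hindep : ω₁.1 * ω₂.2 - ω₁.2 * ω₂.1 ≠ 0)
    (ψ : ℝ × ℝ → E3) (hψ : Sm3 ψ) (hψper : Per ω₁ ω₂ ψ)
    (hsph : ∀ p, ‖ψ p‖ = 1) (hharm : Harmonic ψ) :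
    (∀ α : ℝ × ℝ → ℝ, Sm3 α → Per ω₁ ω₂ α → ∀ p,
      Lop ψ (fun q => α q • ψ q) p
        = (-(lap α p)) • ψ p + (-(4 * pdx α p)) • pdx ψ p + (-(4 * pdy α p)) • pdy ψ p) ∧
    (∀ Z : ℝ × ℝ → E3, Sm3 Z → Per ω₁ ω₂ Z →
      ((∀ p, Lop ψ Z p = 0) ↔
        ∃ (V : ℝ × ℝ → E3) (c : ℝ), InKerJ ω₁ ω₂ ψ V ∧ Z = fun p => V p + c • ψ p)) :=
  stmt4_improved_jacobi_normal' ω₁ ω₂ hindep ψ hψ hψper hsph hharm
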